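/- Let w ∈ αΣ* ∩ Σ*‾α be non-α-crossing. Then the factor w occurs exactly once in every word belonging to the iterated hairpin completion H*_α(w). -/

import Mathlib

open List

namespace Hairpin

variable {S : Type} [DecidableEq S]

/-- Antimorphic extension of an involution to words. -/
def comp (bar : S → S) (w : List S) : List S := (w.map bar).reverse

/-- Right hairpin completion w.r.t. primer `a`. -/
def RH (bar : S → S) (a w z : List S) : Prop :=
  ∃ γ β : List S, w = γ ++ a ++ β ++ comp bar a ∧ z = w ++ comp bar γ

/-- Left hairpin completion w.r.t. primer `a`. -/
def LH (bar : S → S) (a w z : List S) : Prop :=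
  ∃ γ β : List S, w = a ++ β ++ comp bar a ++ comp bar γ ∧ z = γ ++ w

/-- One hairpin completion step. -/
def HC (bar : S → S) (a w z : List S) : Prop := RH bar a w z ∨ LH bar a w z

/-- Iterated hairpin completion `H*_α(w)`. -/
def HCstar (bar : S → S) (a w : List S) : Set (List S) :=
  { z | Relation.ReflTransGen (HC bar a) w z }

/-- `w` is non-`a`-crossing: every occurrence of `a` starts no later than
every occurrence of `comp bar a`. -/
def NonCrossing (bar : S → S) (a w : List S) : Prop :=
  ∀ i j : ℕ, a <+: w.drop i → comp bar a <+: w.drop j → i ≤ j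

/-- The set of `a`-prefixes of `w`. -/
def Pa (a w : List S) : Set (List S) := { u | u ++ a <+: w }

/-- The set of `‾a`-suffixes of `w` (the elements are the words `‾v`). -/
def Sa (bar : S → S) (a w : List S) : Set (List S) :=
  { x | comp bar a ++ x <:+ w }

/-- The set of complements of `‾a`-suffixes of `w`, i.e. `‾(S_‾α(w))`. -/
def barSa (bar : S → S) (a w : List S) : Set (List S) :=
  { v | comp bar a ++ comp bar v <:+ w }

/-- Kleene star of a set of words: all finite concatenations. -/
def star (X : Set (List S)) : Set (List S) :=
  { x | ∃ l : List (List S), (∀ y ∈ l, y ∈ X) ∧ x = l.flatten }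

/-- `ind_α(x)`: the number of occurrences of `a` in `x ++ a` other than the
suffix occurrence, i.e. the number of positions `i < |x|` where `a` occurs. -/
def inda (a x : List S) : ℕ :=
  ((Finset.range x.length).filter (fun i => a <+: (x ++ a).drop i)).card

/-! Every completion step contains the word it completes, so `w` occurs in each `z ∈ H*_α(w)`.
Being non-crossing survives a right completion `γαβ‾α ↦ γαβ‾α‾γ`, and a left completion is a
right completion read through the antimorphism; so every such `z` is non-crossing. Finally, if
`w` occurred at positions `i < j` of a non-crossing `z`, the last `α` of the copy at `j` would
start before the final `‾α` of the copy at `i`, hence inside that copy, beyond its last `α`. -/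

section Lists

variable {α : Type*} {u w l : List α} {i k : ℕ}

theorem prefix_drop_length_append (s u t : List α) : u <+: (s ++ u ++ t).drop s.length := by
  simp

theorem exists_eq_append_of_prefix_drop (hu : u ≠ []) (h : u <+: l.drop i) :
    ∃ s t, l = s ++ u ++ t ∧ s.length = i := by
  have hi : i ≤ l.length := by
    by_contra! hlt
    rw [List.drop_eq_nil_of_le hlt.le, List.prefix_nil] at h
    exact hu h
  obtain ⟨t, ht⟩ := h
  exact ⟨l.take i, t, by rw [List.append_assoc, ht, List.take_append_drop], by simp [hi]⟩

theorem prefix_drop_of_prefix_drop (hw : w <+: l) (h : u <+: l.drop k)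
    (hk : k + u.length ≤ w.length) : u <+: w.drop k :=
  List.prefix_of_prefix_length_le h (hw.drop k) (by simp; omega)

theorem prefix_drop_add (hw : w <+: l.drop i) (hu : u <+: w.drop k) : u <+: l.drop (i + k) := by
  simpa [List.drop_drop] using hu.trans (hw.drop k)

theorem exists_prefix_drop_of_infix (h : w <:+: l) : ∃ i, w <+: l.drop i := by
  obtain ⟨s, t, rfl⟩ := h
  exact ⟨s.length, by simp⟩

end Lists

section Complement

variable {A : Type} {bar : A → A} {a s t u z z' : List A}

@[simp]
theorem comp_append (x y : List A) : comp bar (x ++ y) = comp bar y ++ comp bar x := by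
  simp [comp]

@[simp]
theorem length_comp (x : List A) : (comp bar x).length = x.length := by
  simp [comp]

theorem comp_comp (hbar : Function.Involutive bar) (x : List A) : comp bar (comp bar x) = x := by
  simp [comp, List.map_reverse, hbar.comp_self]

theorem comp_eq_append_iff (hbar : Function.Involutive bar) :
    comp bar z = s ++ u ++ t ↔ z = comp bar t ++ comp bar u ++ comp bar s := by
  constructor
  · intro h
    rw [← comp_comp hbar z, h]
    simp
  · rintro rfl
    simp [comp_comp hbar]

theorem NonCrossing.ne_nil (hnc : NonCrossing bar a z) : a ≠ [] := by
  rintro rfl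
  have := hnc 1 0 (List.nil_prefix) (by simp [comp])
  omega

theorem NonCrossing.length_le (hnc : NonCrossing bar a z) {s₁ t₁ s₂ t₂ : List A}
    (h₁ : z = s₁ ++ a ++ t₁) (h₂ : z = s₂ ++ comp bar a ++ t₂) : s₁.length ≤ s₂.length :=
  hnc _ _ (h₁ ▸ prefix_drop_length_append _ _ _) (h₂ ▸ prefix_drop_length_append _ _ _)

theorem nonCrossing_comp (hbar : Function.Involutive bar) (hnc : NonCrossing bar a z) :
    NonCrossing bar a (comp bar z) := by
  have ha := hnc.ne_nil
  have hca : comp bar a ≠ [] := by simpa [comp] using ha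
  intro i j hi hj
  obtain ⟨s, t, hst, rfl⟩ := exists_eq_append_of_prefix_drop ha hi
  obtain ⟨s', t', hst', rfl⟩ := exists_eq_append_of_prefix_drop hca hj
  rw [comp_eq_append_iff hbar] at hst hst'
  rw [comp_comp hbar] at hst'
  have hle := hnc.length_le hst' hst
  have := congrArg List.length (hst.symm.trans hst')
  simp only [List.length_append, length_comp] at hle this
  omega

theorem NonCrossing.of_RH (hbar : Function.Involutive bar) (hnc : NonCrossing bar a z)
    (hz : RH bar a z z') : NonCrossing bar a z' := by
  obtain ⟨γ, β, rfl, rfl⟩ := hz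
  have ha := hnc.ne_nil
  -- an occurrence of `a` reaching into the appended `‾γ` would lie inside `‾(γ a)`, giving an
  -- occurrence of `‾a` inside `γ`, to the left of the occurrence of `a` after `γ`
  have hin : ∀ i, a <+: (γ ++ a ++ β ++ comp bar a ++ comp bar γ).drop i →
      i + a.length ≤ (γ ++ a ++ β ++ comp bar a).length := by
    intro i hi
    by_contra! hout
    have hsplit :
        γ ++ a ++ β ++ comp bar a ++ comp bar γ = γ ++ a ++ β ++ comp bar (γ ++ a) := by
      simp
    rw [hsplit, List.drop_append, List.drop_eq_nil_of_le (by simp at hout ⊢; omega),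
      List.nil_append] at hi
    obtain ⟨s, t, hst, hs⟩ := exists_eq_append_of_prefix_drop ha hi
    rw [comp_eq_append_iff hbar] at hst
    have hle := hnc.length_le (s₁ := γ) (t₁ := β ++ comp bar a) (by simp)
      (s₂ := comp bar t) (t₂ := comp bar s ++ β ++ comp bar a)
      (by simp [← List.append_assoc, ← hst])
    have := congrArg List.length hst
    simp only [List.length_append, length_comp] at hle this hout hs
    omega
  intro i j hi hj
  have hi' := hin i hi
  by_cases hj' : j + a.length ≤ (γ ++ a ++ β ++ comp bar a).length
  · exact hnc i j (prefix_drop_of_prefix_drop (List.prefix_append _ _) hi hi')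
      (prefix_drop_of_prefix_drop (List.prefix_append _ _) hj (by simpa using hj'))
  · omega

theorem LH.rh_comp (hbar : Function.Involutive bar) (h : LH bar a z z') :
    RH bar a (comp bar z) (comp bar z') := by
  obtain ⟨γ, β, rfl, rfl⟩ := h
  exact ⟨γ, comp bar β, by simp [comp_comp hbar], by simp⟩

theorem NonCrossing.of_HC (hbar : Function.Involutive bar) (hnc : NonCrossing bar a z)
    (h : HC bar a z z') : NonCrossing bar a z' := by
  rcases h with h | h
  · exact hnc.of_RH hbar h
  · have := (nonCrossing_comp hbar hnc).of_RH hbar (h.rh_comp hbar)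
    simpa [comp_comp hbar] using nonCrossing_comp hbar this

theorem HC.infix (h : HC bar a z z') : z <:+: z' := by
  rcases h with ⟨γ, β, -, rfl⟩ | ⟨γ, β, -, rfl⟩
  · exact List.infix_append [] z _
  · simpa using List.infix_append γ z []

theorem NonCrossing.of_mem_HCstar {w : List A} (hbar : Function.Involutive bar)
    (hnc : NonCrossing bar a w) (hz : z ∈ HCstar bar a w) : NonCrossing bar a z := by
  induction hz with
  | refl => exact hnc
  | tail _ hstep ih => exact ih.of_HC hbar hstep

theorem infix_of_mem_HCstar {w : List A} (hz : z ∈ HCstar bar a w) : w <:+: z := by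
  induction hz with
  | refl => exact List.infix_refl w
  | tail _ hstep ih => exact ih.trans hstep.infix

theorem NonCrossing.le_of_prefix_drop {w : List A} {i j : ℕ} (hnc : NonCrossing bar a z)
    (hp : a <+: w) (hs : comp bar a <:+ w) (hi : w <+: z.drop i) (hj : w <+: z.drop j) :
    j ≤ i := by
  classical
  by_contra! hij
  obtain ⟨p, hpw⟩ := hs
  have hlen : p.length + a.length = w.length := by rw [← hpw]; simp
  have hca : comp bar a <+: w.drop p.length := by rw [← hpw]; simp
  let r := Nat.findGreatest (fun k => a <+: w.drop k) w.length
  have hr : a <+: w.drop r :=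
    Nat.findGreatest_spec (P := fun k => a <+: w.drop k) (Nat.zero_le _) (by simpa using hp)
  have hle : j + r ≤ i + p.length := hnc _ _ (prefix_drop_add hj hr) (prefix_drop_add hi hca)
  have hnext : a <+: w.drop (j - i + r) := by
    refine prefix_drop_of_prefix_drop hi ?_ (by omega)
    rw [List.drop_drop]
    convert prefix_drop_add hj hr using 2
    omega
  have := Nat.le_findGreatest (P := fun k => a <+: w.drop k) (n := w.length) (by omega) hnext
  omega

end Complement

theorem stmt3_general (bar : S → S) (hbar : Function.Involutive bar)
    (a w : List S)
    (hp : a <+: w) (hs : comp bar a <:+ w)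
    (hnc : NonCrossing bar a w) :
    ∀ z ∈ HCstar bar a w, ∃! i : ℕ, w <+: z.drop i := by
  intro z hz
  have hncz := hnc.of_mem_HCstar hbar hz
  obtain ⟨i, hi⟩ := exists_prefix_drop_of_infix (infix_of_mem_HCstar hz)
  exact ⟨i, hi, fun j hj =>
    le_antisymm (NonCrossing.le_of_prefix_drop hncz hp hs hi hj)
      (NonCrossing.le_of_prefix_drop hncz hp hs hj hi)⟩

theorem stmt3 (bar : S → S) (hbar : Function.Involutive bar)
    (a w : List S) (ha : a ≠ comp bar a)
    (hp : a <+: w) (hs : comp bar a <:+ w)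
    (hnc : NonCrossing bar a w) :
    ∀ z ∈ HCstar bar a w, ∃! i : ℕ, w <+: z.drop i :=
  stmt3_general bar hbar a w hp hs hnc

end Hairpin
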